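/- arXiv:2211.06674 — 2 statements merged into one kernel-verified Lean document; each statement's English description precedes it below -/
import Mathlib

section
/- With the same setting: V(x,·) positive nondecreasing, φ:(1,∞)→(0,∞) increasing continuous unbounded, and Θ(x,r,t) := ∫_{φ(r)}^{t} ds/V(x, φ^{-1}(s)). Then for every x ∈ M and all t > u ≥ 2φ(r), one has Θ(x,r,t)/Θ(x,r,u) ≤ 3 (t/u)^{log 3 / log 2}. -/
open MeasureTheory

/-- doubling-type upper bound `Θ(x,r,t)/Θ(x,r,u) ≤ 3 (t/u)^{log 3/log 2}`
for `t > u ≥ 2φ(r)`. -/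
theorem stmt_4 {M : Type*} [MetricSpace M] [MeasurableSpace M]
    (μ : Measure M) (o : M)
    (hfin : ∀ (x : M) (r : ℝ), μ (Metric.ball x r) ≠ ⊤)
    (hVpos : ∀ (x : M) (r : ℝ), 0 < r → 0 < μ (Metric.ball x r))
    (φ φinv : ℝ → ℝ)
    (hφpos : ∀ s, 1 < s → 0 < φ s)
    (hφmono : StrictMonoOn φ (Set.Ioi 1))
    (hφcont : ContinuousOn φ (Set.Ioi 1))
    (hφtop : Filter.Tendsto φ Filter.atTop Filter.atTop)
    (hinvmono : Monotone φinv)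
    (hinv : ∀ s, 1 < s → φinv (φ s) = s) :
    ∀ (x : M) (r u t : ℝ), 1 < r → 2 * φ r ≤ u → u < t →
      (∫ s in (φ r)..t, ((μ (Metric.ball x (φinv s))).toReal)⁻¹) /
        (∫ s in (φ r)..u, ((μ (Metric.ball x (φinv s))).toReal)⁻¹) ≤
      3 * (t / u) ^ (Real.log 3 / Real.log 2) := by
  intro x r u t hr1 hu hut
  set f : ℝ → ℝ := fun s => ((μ (Metric.ball x (φinv s))).toReal)⁻¹ with hf
  have hφr : 0 < φ r := hφpos r hr1
  have hinvr : φinv (φ r) = r := hinv r hr1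
  -- positivity of f on [φ r, ∞)
  have hfpos : ∀ s, φ r ≤ s → 0 < f s := by
    intro s hs
    have h1 : r ≤ φinv s := by rw [← hinvr]; exact hinvmono hs
    have h2 : (0:ℝ) < φinv s := lt_of_lt_of_le (by linarith) h1
    exact inv_pos.mpr (ENNReal.toReal_pos (ne_of_gt (hVpos x (φinv s) h2)) (hfin x (φinv s)))
  -- antitonicity of f on [φ r, ∞)
  have hfanti : AntitoneOn f (Set.Ici (φ r)) := by
    intro a ha b hb hab
    have h2 : μ (Metric.ball x (φinv a)) ≤ μ (Metric.ball x (φinv b)) :=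
      measure_mono (Metric.ball_subset_ball (hinvmono hab))
    have h3 : (μ (Metric.ball x (φinv a))).toReal ≤ (μ (Metric.ball x (φinv b))).toReal :=
      ENNReal.toReal_mono (hfin x _) h2
    have h4 : 0 < (μ (Metric.ball x (φinv a))).toReal := inv_pos.mp (hfpos a ha)
    exact inv_anti₀ h4 h3
  -- interval integrability
  have hint : ∀ a b : ℝ, φ r ≤ a → φ r ≤ b → IntervalIntegrable f volume a b := by
    intro a b ha hb
    have hsub : Set.uIcc a b ⊆ Set.Ici (φ r) := fun z hz => le_trans (le_inf ha hb) hz.1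
    exact (hfanti.mono hsub).intervalIntegrable
  -- doubling estimate
  have key : ∀ v : ℝ, 2 * φ r ≤ v →
      (∫ s in (φ r)..(2*v), f s) ≤ 3 * ∫ s in (φ r)..v, f s := by
    intro v hv
    have hv0 : φ r ≤ v := by linarith
    have hv2 : φ r ≤ 2 * v := by linarith
    have hvv : v ≤ 2 * v := by linarith
    have hsplit : (∫ s in (φ r)..v, f s) + (∫ s in v..(2*v), f s)
        = ∫ s in (φ r)..(2*v), f s :=
      intervalIntegral.integral_add_adjacent_intervals (hint _ _ le_rfl hv0) (hint _ _ hv0 hv2)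
    have hub : (∫ s in v..(2*v), f s) ≤ (2*v - v) * f v := by
      have h1 : (∫ s in v..(2*v), f s) ≤ ∫ s in v..(2*v), f v := by
        apply intervalIntegral.integral_mono_on hvv (hint _ _ hv0 hv2) intervalIntegrable_const
        intro z hz
        exact hfanti (Set.mem_Ici.mpr hv0) (Set.mem_Ici.mpr (le_trans hv0 hz.1)) hz.1
      have h2 : (∫ s in v..(2*v), (f v : ℝ)) = (2*v - v) * f v := by
        rw [intervalIntegral.integral_const, smul_eq_mul]
      linarith
    have hlb : (v - φ r) * f v ≤ ∫ s in (φ r)..v, f s := by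
      have h2 : (∫ s in (φ r)..v, (f v : ℝ)) = (v - φ r) * f v := by
        rw [intervalIntegral.integral_const, smul_eq_mul]
      have h1 : (∫ s in (φ r)..v, (f v : ℝ)) ≤ ∫ s in (φ r)..v, f s := by
        apply intervalIntegral.integral_mono_on hv0 intervalIntegrable_const (hint _ _ le_rfl hv0)
        intro z hz
        exact hfanti (Set.mem_Ici.mpr hz.1) (Set.mem_Ici.mpr hv0) hz.2
      linarith
    have hfv : 0 < f v := hfpos v hv0
    nlinarith
  -- iteration
  have iter : ∀ n : ℕ, (∫ s in (φ r)..((2:ℝ)^n * u), f s) ≤ 3^n * ∫ s in (φ r)..u, f s := by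
    intro n
    induction n with
    | zero => simp
    | succ n ih =>
      have h1n : (1:ℝ) ≤ 2^n := one_le_pow₀ (by norm_num : (1:ℝ) ≤ 2)
      have h2n : 2 * φ r ≤ 2^n * u := by nlinarith
      have heq : (2:ℝ)^(n+1) * u = 2 * ((2:ℝ)^n * u) := by ring
      rw [heq]
      calc (∫ s in (φ r)..(2 * ((2:ℝ)^n * u)), f s)
          ≤ 3 * ∫ s in (φ r)..((2:ℝ)^n * u), f s := key _ h2n
        _ ≤ 3 * (3^n * ∫ s in (φ r)..u, f s) := by linarith
        _ = 3^(n+1) * ∫ s in (φ r)..u, f s := by ring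
  have hu0 : (0:ℝ) < u := by linarith
  have hq1 : 1 < t / u := (one_lt_div hu0).mpr hut
  set α : ℝ := Real.log 3 / Real.log 2 with hα
  have h2a : (2:ℝ) ^ α = 3 := by
    rw [Real.rpow_def_of_pos (by norm_num : (0:ℝ) < 2), hα]
    rw [mul_div_assoc', mul_comm, mul_div_assoc, div_self (by positivity : Real.log 2 ≠ 0)]
    · rw [mul_one, Real.exp_log (by norm_num)]
  have hpow : ∀ k : ℕ, ((2:ℝ)^k) ^ α = 3^k := by
    intro k
    rw [← Real.rpow_natCast 2 k, ← Real.rpow_mul (by norm_num), mul_comm,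
      Real.rpow_mul (by norm_num), h2a, Real.rpow_natCast]
  set n : ℕ := ⌈Real.logb 2 (t/u)⌉₊ with hn
  have hlogpos : 0 < Real.logb 2 (t/u) := Real.logb_pos (by norm_num) hq1
  have hn1 : 1 ≤ n := by
    rw [hn]
    exact_mod_cast Nat.lt_ceil.mpr (by exact_mod_cast hlogpos)
  obtain ⟨m, hm⟩ : ∃ m, n = m + 1 := ⟨n - 1, by omega⟩
  -- t ≤ 2^n * u
  have htle : t ≤ (2:ℝ)^n * u := by
    have h1 : Real.logb 2 (t/u) ≤ (n:ℝ) := Nat.le_ceil _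
    have h2 : t/u ≤ (2:ℝ) ^ (n:ℝ) :=
      (Real.logb_le_iff_le_rpow (by norm_num) (by linarith)).mp h1
    rw [Real.rpow_natCast] at h2
    calc t = (t/u) * u := by field_simp
      _ ≤ (2:ℝ)^n * u := by nlinarith
  -- 2^m < t/u
  have h2m : (2:ℝ)^m < t/u := by
    have h1 : (m:ℝ) < Real.logb 2 (t/u) := by
      have := Nat.lt_ceil.mp (by omega : m < n)
      exact_mod_cast this
    have h2 : (2:ℝ) ^ (m:ℝ) < t/u :=
      (Real.lt_logb_iff_rpow_lt (by norm_num) (by linarith)).mp h1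
    rwa [Real.rpow_natCast] at h2
  -- 3^n ≤ 3 * (t/u)^α
  have h3n : (3:ℝ)^n ≤ 3 * (t/u) ^ α := by
    have hαpos : 0 < α := by
      rw [hα]
      exact div_pos (Real.log_pos (by norm_num)) (Real.log_pos (by norm_num))
    have h1 : ((2:ℝ)^m) ^ α ≤ (t/u) ^ α :=
      Real.rpow_le_rpow (by positivity) (le_of_lt h2m) (le_of_lt hαpos)
    rw [hpow m] at h1
    rw [hm, pow_succ]
    nlinarith [pow_pos (by norm_num : (0:ℝ) < 3) m]
  -- endpoint monotonicity
  have hφrt : φ r ≤ t := by linarith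
  have hφru : φ r ≤ u := by linarith
  have hφr2n : φ r ≤ (2:ℝ)^n * u := by linarith
  have hmonoend : (∫ s in (φ r)..t, f s) ≤ ∫ s in (φ r)..((2:ℝ)^n * u), f s := by
    have hsplit : (∫ s in (φ r)..t, f s) + (∫ s in t..((2:ℝ)^n * u), f s)
        = ∫ s in (φ r)..((2:ℝ)^n * u), f s :=
      intervalIntegral.integral_add_adjacent_intervals (hint _ _ le_rfl hφrt)
        (hint _ _ hφrt hφr2n)
    have hnn : 0 ≤ ∫ s in t..((2:ℝ)^n * u), f s := by
      apply intervalIntegral.integral_nonneg htle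
      intro z hz
      exact le_of_lt (hfpos z (le_trans hφrt hz.1))
    linarith
  -- positivity of Θ(u)
  have hΘu : 0 < ∫ s in (φ r)..u, f s := by
    apply intervalIntegral.intervalIntegral_pos_of_pos_on (hint _ _ le_rfl hφru)
    · intro z hz
      exact hfpos z (le_of_lt hz.1)
    · linarith
  -- conclude
  rw [div_le_iff₀ hΘu]
  calc (∫ s in (φ r)..t, f s)
      ≤ ∫ s in (φ r)..((2:ℝ)^n * u), f s := hmonoend
    _ ≤ 3^n * ∫ s in (φ r)..u, f s := iter n
    _ ≤ 3 * (t/u) ^ α * ∫ s in (φ r)..u, f s := by nlinarith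
end

section
/- (Conditional Borel–Cantelli-type zero-one estimate) Let (Ω̃, P̃, G, (G_t)_{t≥0}) be a filtered probability space and (s_n) an increasing sequence with s_n → ∞. Suppose events (E_n) and (G_n) satisfy: (1) E_n, G_n ∈ G_{s_n}; (2) there exist p > 0 and a sequence (b_n) with Σ b_n = ∞ such that P̃(G_n^c) ≤ p and P̃(E_{n+1} | G_{s_n}) ≥ b_n 1_{G_n} a.s., for all n ≥ 1. Then P̃(limsup_n E_n) ≥ 1 − p. In particular, if P̃(G_n^c) → 0 then P̃(limsup_n E_n) = 1. -/
/-!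
By Lévy's conditional Borel–Cantelli lemma, off `limsup E` the series `∑ P[E (n+1) | ℱ (s n)]`
converges, hence so does `∑ bₙ⁺ 1_{Gₙ}`. If these partial sums stay below `M` on a set `B`,
integrating over `B` gives `∑ bₙ⁺ P(Gₙ ∩ B) ≤ M P(B)`, while `P(Gₙ ∩ B) ≥ P(B) - P(Gₙᶜ)`;
as `∑ bₙ⁺ = ∞`, this forces `P(B) ≤ limsup P(Gₙᶜ)`.
-/

open MeasureTheory Filter
open scoped ENNReal

namespace MeasureTheory

def Filtration.reindex {ι κ Ω : Type*} [Preorder ι] [Preorder κ] {m : MeasurableSpace Ω}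
    (ℱ : Filtration ι m) {s : κ → ι} (hs : Monotone s) : Filtration κ m where
  seq n := ℱ (s n)
  mono' _ _ hij := ℱ.mono (hs hij)
  le' n := ℱ.le (s n)

variable {Ω : Type*} {m0 : MeasurableSpace Ω} {μ : Measure Ω}

lemma condExp_indicator_one_nonneg (m : MeasurableSpace Ω) (A : Set Ω) :
    0 ≤ᵐ[μ] μ[A.indicator (1 : Ω → ℝ) | m] :=
  condExp_nonneg (Eventually.of_forall fun ω => Set.indicator_nonneg (fun _ _ => zero_le_one) ω)

variable [IsFiniteMeasure μ] {b : ℕ → ℝ} {G : ℕ → Set Ω}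

lemma measureReal_le_of_forall_sum_mul_indicator_le (hb0 : ∀ n, 0 ≤ b n) (hb : ¬ Summable b)
    (hG : ∀ n, MeasurableSet (G n)) {q : ℝ} (hq : ∀ᶠ n in atTop, μ.real (G n)ᶜ ≤ q)
    {B : Set Ω} (hB : MeasurableSet B) {M : ℝ}
    (hBM : ∀ ω ∈ B, ∀ N, ∑ n ∈ Finset.range N, b n * (G n).indicator 1 ω ≤ M) :
    μ.real B ≤ q := by
  have hint : ∀ n, Integrable (fun ω => b n * (G n).indicator (1 : Ω → ℝ) ω) (μ.restrict B) :=
    fun n => ((integrable_const 1).indicator (hG n)).const_mul (b n)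
  have hsum_le : ∀ N, ∑ n ∈ Finset.range N, b n * μ.real (G n ∩ B) ≤ M * μ.real B := fun N =>
    calc ∑ n ∈ Finset.range N, b n * μ.real (G n ∩ B)
        = ∫ ω in B, ∑ n ∈ Finset.range N, b n * (G n).indicator 1 ω ∂μ := by
          rw [integral_finsetSum _ fun n _ => hint n]
          simp only [integral_const_mul, integral_indicator_one (hG _),
            measureReal_restrict_apply (hG _)]
      _ ≤ ∫ _ in B, M ∂μ :=
          setIntegral_mono_on (integrable_finsetSum _ fun n _ => hint n) (integrable_const M) hB
            fun ω hω => hBM ω hω N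
      _ = M * μ.real B := by rw [setIntegral_const, smul_eq_mul, mul_comm]
  have hsummable : Summable fun n => b n * μ.real (G n ∩ B) :=
    summable_of_sum_range_le (fun n => mul_nonneg (hb0 n) measureReal_nonneg) hsum_le
  by_contra! hqB
  refine hb ((hsummable.div_const (μ.real B - q)).of_norm_bounded_eventually_nat ?_)
  filter_upwards [hq] with n hn
  have hGB : μ.real B - q ≤ μ.real (G n ∩ B) := by
    have hsplit := measureReal_inter_add_sdiff (μ := μ) (s := B) (hG n)
    have hdiff : μ.real (B \ G n) ≤ μ.real (G n)ᶜ := measureReal_mono Set.inter_subset_right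
    rw [Set.inter_comm] at hsplit
    linarith
  rw [Real.norm_of_nonneg (hb0 n), le_div_iff₀ (sub_pos.2 hqB)]
  exact mul_le_mul_of_nonneg_left hGB (hb0 n)

lemma measure_setOf_summable_mul_indicator_le_limsup (hb0 : ∀ n, 0 ≤ b n) (hb : ¬ Summable b)
    (hG : ∀ n, MeasurableSet (G n)) :
    μ {ω | Summable fun n => b n * (G n).indicator 1 ω} ≤ limsup (fun n => μ (G n)ᶜ) atTop := by
  refine le_of_forall_gt_imp_ge_of_dense fun q hq => ?_
  rcases eq_or_ne q ∞ with rfl | hq_top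
  · exact le_top
  set B : ℕ → Set Ω := fun M => ⋂ N, {ω | ∑ n ∈ Finset.range N, b n * (G n).indicator 1 ω ≤ M}
  have hB_meas : ∀ M, MeasurableSet (B M) := fun M => MeasurableSet.iInter fun N =>
    measurableSet_le (Finset.measurable_sum _ fun n _ =>
      (measurable_const.indicator (hG n)).const_mul (b n)) measurable_const
  have hB_mono : Monotone B := fun M M' hM => Set.iInter_mono fun N _ hω =>
    le_trans (b := (M : ℝ)) hω (Nat.cast_le.2 hM)
  have hsub : {ω | Summable fun n => b n * (G n).indicator 1 ω} ⊆ ⋃ M, B M := by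
    intro ω hω
    obtain ⟨M, hM⟩ := exists_nat_ge (∑' n, b n * (G n).indicator 1 ω)
    refine Set.mem_iUnion.2 ⟨M, Set.mem_iInter.2 fun N => ?_⟩
    exact (hω.sum_le_tsum _ fun n _ =>
      mul_nonneg (hb0 n) (Set.indicator_nonneg (by simp) ω)).trans hM
  calc μ {ω | Summable fun n => b n * (G n).indicator 1 ω} ≤ μ (⋃ M, B M) := measure_mono hsub
    _ = ⨆ M, μ (B M) := hB_mono.measure_iUnion
    _ ≤ q := iSup_le fun M => ?_
  rw [← ENNReal.ofReal_toReal hq_top, ← ENNReal.ofReal_toReal (measure_ne_top μ (B M))]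
  refine ENNReal.ofReal_le_ofReal (measureReal_le_of_forall_sum_mul_indicator_le hb0 hb hG ?_
    (hB_meas M) fun _ hω N => Set.mem_iInter.1 hω N)
  filter_upwards [eventually_lt_of_limsup_lt hq] with n hn using ENNReal.toReal_mono hq_top hn.le

lemma ae_summable_mul_indicator_of_notMem_limsup {ℱ : Filtration ℕ m0} {E : ℕ → Set Ω}
    (hE : ∀ n, MeasurableSet[ℱ n] (E n)) (hb0 : ∀ n, 0 ≤ b n)
    (hcond : ∀ n, ∀ᵐ ω ∂μ,
      b n * (G n).indicator 1 ω ≤ μ[(E (n + 1)).indicator (1 : Ω → ℝ) | ℱ n] ω) :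
    ∀ᵐ ω ∂μ, ω ∉ limsup E atTop → Summable fun n => b n * (G n).indicator 1 ω := by
  filter_upwards [ae_mem_limsup_atTop_iff μ hE, ae_all_iff.2 hcond,
    ae_all_iff.2 fun n => condExp_indicator_one_nonneg (ℱ n) (E (n + 1))]
    with ω hlimsup hle hg0 hω
  have hg : Summable fun n => μ[(E (n + 1)).indicator (1 : Ω → ℝ) | ℱ n] ω := by
    by_contra h
    exact hω (hlimsup.2 ((not_summable_iff_tendsto_nat_atTop_of_nonneg hg0).1 h))
  exact hg.of_nonneg_of_le (fun n => mul_nonneg (hb0 n) (Set.indicator_nonneg (by simp) ω)) hle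

end MeasureTheory

theorem stmt_10_general {Ω : Type*} {m0 : MeasurableSpace Ω} (P : Measure Ω)
    [IsProbabilityMeasure P] (ℱ : Filtration ℝ m0)
    (s : ℕ → ℝ) (hs : StrictMono s)
    (E G : ℕ → Set Ω)
    (hE : ∀ n, MeasurableSet[ℱ (s n)] (E n))
    (hG : ∀ n, MeasurableSet[ℱ (s n)] (G n))
    (p : ℝ) (hp : 0 < p) (b : ℕ → ℝ)
    (hb : Tendsto (fun N => ∑ n ∈ Finset.range N, b n) atTop atTop)
    (hGp : ∀ n, P (G n)ᶜ ≤ ENNReal.ofReal p)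
    (hcond : ∀ n, ∀ᵐ ω ∂P,
      b n * (G n).indicator (fun _ => (1:ℝ)) ω ≤
        (P[(E (n+1)).indicator (fun _ => (1:ℝ)) | ℱ (s n)]) ω) :
    ENNReal.ofReal (1 - p) ≤ P (limsup E atTop) ∧
      (Tendsto (fun n => P (G n)ᶜ) atTop (nhds 0) → P (limsup E atTop) = 1) := by
  set b' : ℕ → ℝ := fun n => max (b n) 0
  have hb'0 : ∀ n, 0 ≤ b' n := fun n => le_max_right _ _
  have hb' : ¬ Summable b' := (not_summable_iff_tendsto_nat_atTop_of_nonneg hb'0).2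
    (tendsto_atTop_mono (fun N => Finset.sum_le_sum fun n _ => le_max_left _ _) hb)
  have hcond' : ∀ n, ∀ᵐ ω ∂P, b' n * (G n).indicator 1 ω ≤
      P[(E (n + 1)).indicator 1 | ℱ.reindex hs.monotone n] ω := fun n => by
    filter_upwards [hcond n, condExp_indicator_one_nonneg (ℱ (s n)) (E (n + 1))] with ω hbg hg0
    rw [max_mul_of_nonneg _ _ (Set.indicator_nonneg (by simp) ω), zero_mul]
    exact max_le hbg hg0
  have hcompl : P (limsup E atTop)ᶜ ≤ limsup (fun n => P (G n)ᶜ) atTop :=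
    (measure_mono_ae (ae_summable_mul_indicator_of_notMem_limsup hE hb'0 hcond')).trans
      (measure_setOf_summable_mul_indicator_le_limsup hb'0 hb' fun n => ℱ.le _ _ (hG n))
  rw [prob_compl_eq_one_sub (MeasurableSet.measurableSet_limsup fun n => ℱ.le _ _ (hE n))] at hcompl
  refine ⟨?_, fun hGc => ?_⟩
  · rw [ENNReal.ofReal_sub _ hp.le, ENNReal.ofReal_one, tsub_le_iff_tsub_le]
    exact hcompl.trans (limsup_le_of_le (h := Eventually.of_forall hGp))
  · rw [hGc.limsup_eq, nonpos_iff_eq_zero, tsub_eq_zero_iff_le] at hcompl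
    exact le_antisymm prob_le_one hcompl

/-- conditional Borel–Cantelli-type zero-one estimate:
if `P(Gₙᶜ) ≤ p` and `P(Eₙ₊₁ | 𝒢_{sₙ}) ≥ bₙ 1_{Gₙ}` a.s. with `Σ bₙ = ∞`, then
`P(limsup Eₙ) ≥ 1 − p`; if moreover `P(Gₙᶜ) → 0`, then `P(limsup Eₙ) = 1`. -/
theorem stmt_10 {Ω : Type*} {m0 : MeasurableSpace Ω} (P : Measure Ω)
    [IsProbabilityMeasure P] (ℱ : Filtration ℝ m0)
    (s : ℕ → ℝ) (hs : StrictMono s) (hstop : Tendsto s atTop atTop)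
    (E G : ℕ → Set Ω)
    (hE : ∀ n, MeasurableSet[ℱ (s n)] (E n))
    (hG : ∀ n, MeasurableSet[ℱ (s n)] (G n))
    (p : ℝ) (hp : 0 < p) (b : ℕ → ℝ)
    (hb : Tendsto (fun N => ∑ n ∈ Finset.range N, b n) atTop atTop)
    (hGp : ∀ n, P (G n)ᶜ ≤ ENNReal.ofReal p)
    (hcond : ∀ n, ∀ᵐ ω ∂P,
      b n * (G n).indicator (fun _ => (1:ℝ)) ω ≤
        (P[(E (n+1)).indicator (fun _ => (1:ℝ)) | ℱ (s n)]) ω) :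
    ENNReal.ofReal (1 - p) ≤ P (limsup E atTop) ∧
      (Tendsto (fun n => P (G n)ᶜ) atTop (nhds 0) → P (limsup E atTop) = 1) :=
  stmt_10_general P ℱ s hs E G hE hG p hp b hb hGp hcond
end
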